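/- arXiv:2204.06741 — 4 statements merged into one kernel-verified Lean document; each statement's English description precedes it below -/
import Mathlib

section
/- Let G be a finite group and l : G → ℝ a conjugation-invariant length function with l(e)=0, and suppose the coefficients p_i(t) defined by Σ_i p_i(t) χ_i(g) = exp(-t·l(g)) for all g ∈ G (where χ_i runs over the irreducible characters of G) satisfy p_i(t) ≥ 0 for all i and all 0 ≤ t ≤ ε for some ε > 0. Then p_i(t) ≥ 0 for all i and all t ≥ 0. -/
open scoped BigOperators
open CategoryTheory

/-- `χ` is the character of some irreducible complex representation of `G`. -/
def IsIrredChar (G : Type) [Group G] (χ : G → ℂ) : Prop :=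
  ∃ V : FDRep ℂ G, Simple V ∧ χ = fun g => V.character g

/-!
Write `t = n s` with `0 ≤ s ≤ ε`. Then `exp (-t l) = (∑ i, p_i(s) χ_i) ^ n`, and by orthonormality
`p_j(t) = ⟨(∑ i, p_i(s) χ_i) ^ n, χ_j⟩`. Nonnegative real combinations of characters form a
semiring (characters multiply under tensor product), and pairing such a combination with a
character gives a nonnegative number, because `⟨χ_W, χ_V⟩ = dim Hom_G(V, W)`.
-/

open FDRep MonoidalCategory
open scoped ComplexOrder

section Pairing

variable {k : Type*} [Field k] {G : Type} [Group G] [Fintype G]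

variable (k) in
noncomputable def charPairing (ψ : G → k) : (G → k) →ₗ[k] k where
  toFun f := (Nat.card G : k)⁻¹ * ∑ g, f g * ψ g⁻¹
  map_add' f f' := by simp only [Pi.add_apply, add_mul, Finset.sum_add_distrib, mul_add]
  map_smul' c f := by
    simp only [Pi.smul_apply, smul_eq_mul, mul_assoc, ← Finset.mul_sum, RingHom.id_apply]
    ring

lemma charPairing_apply (ψ f : G → k) :
    charPairing k ψ f = (Nat.card G : k)⁻¹ * ∑ g, f g * ψ g⁻¹ := rfl

lemma charPairing_sum_smul {ι : Type*} [Fintype ι] [DecidableEq ι] (χ : ι → G → k)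
    (horth : ∀ i j, charPairing k (χ j) (χ i) = if i = j then 1 else 0) (a : ι → k) (j : ι) :
    charPairing k (χ j) (∑ i, a i • χ i) = a j := by
  simp [horth]

variable [Invertible (Nat.card G : k)]

lemma charPairing_character_eq_finrank (V W : FDRep k G) :
    charPairing k V.character W.character = Module.finrank k (V ⟶ W) :=
  scalar_product_char_eq_finrank_equivariant V W

lemma charPairing_character_simple [IsAlgClosed k] {ι : Type*} [DecidableEq ι] (V : ι → FDRep k G)
    [∀ i, Simple (V i)] (hinj : Function.Injective fun i => (V i).character) (i j : ι) :
    charPairing k (V j).character (V i).character = if i = j then 1 else 0 := by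
  have hiso : Nonempty (V i ≅ V j) ↔ i = j :=
    ⟨fun ⟨e⟩ => hinj (char_iso e), by rintro rfl; exact ⟨Iso.refl _⟩⟩
  classical
  rw [charPairing_apply, char_orthonormal]
  simp only [hiso]

end Pairing

section Cone

variable (G : Type) [Monoid G]

def nonnegCharMultiples : Submonoid (G → ℂ) where
  carrier := {f | ∃ c : ℝ, 0 ≤ c ∧ ∃ V : FDRep ℂ G, f = (c : ℂ) • V.character}
  mul_mem' := by
    rintro _ _ ⟨c, hc, V, rfl⟩ ⟨d, hd, W, rfl⟩
    refine ⟨c * d, mul_nonneg hc hd, V ⊗ W, ?_⟩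
    rw [char_tensor, smul_mul_smul_comm, Complex.ofReal_mul]
  one_mem' := by
    refine ⟨1, zero_le_one, FDRep.of (Representation.trivial ℂ G ℂ), funext fun g => ?_⟩
    simp [FDRep.character]

noncomputable def charCone : Subsemiring (G → ℂ) :=
  (nonnegCharMultiples G).subsemiringClosure

variable {G}

lemma smul_character_mem_charCone {c : ℝ} (hc : 0 ≤ c) (V : FDRep ℂ G) :
    (c : ℂ) • V.character ∈ charCone G :=
  AddSubmonoid.subset_closure ⟨c, hc, V, rfl⟩

end Cone

lemma charPairing_nonneg_of_mem_charCone {G : Type} [Group G] [Fintype G]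
    [Invertible (Nat.card G : ℂ)] (V : FDRep ℂ G) {f : G → ℂ} (hf : f ∈ charCone G) :
    0 ≤ charPairing ℂ V.character f := by
  rw [charCone, Submonoid.subsemiringClosure_mem] at hf
  induction hf using AddSubmonoid.closure_induction with
  | mem _ h =>
    obtain ⟨c, hc, W, rfl⟩ := h
    rw [map_smul, charPairing_character_eq_finrank, smul_eq_mul]
    exact mul_nonneg (Complex.zero_le_real.mpr hc) (Nat.cast_nonneg _)
  | zero => simp
  | add _ _ _ _ hf hf' => rw [map_add]; exact add_nonneg hf hf'

lemma exists_eq_nat_mul_of_le {ε t : ℝ} (hε : 0 < ε) (ht : 0 ≤ t) :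
    ∃ (n : ℕ) (s : ℝ), 0 ≤ s ∧ s ≤ ε ∧ t = n * s := by
  set n := ⌈t / ε⌉₊ + 1
  have hn : (0 : ℝ) < n := by positivity
  refine ⟨n, t / n, div_nonneg ht hn.le, ?_, (mul_div_cancel₀ t hn.ne').symm⟩
  rw [div_le_iff₀ hn, ← div_le_iff₀' hε]
  exact (Nat.le_ceil _).trans (by simp [n])

theorem stmt3_general {G : Type} [Group G] [Fintype G] (m : ℕ)
    (χ : Fin m → G → ℂ)
    (hirr : ∀ i, IsIrredChar G (χ i))
    (hinj : Function.Injective χ)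
    (l : G → ℝ)
    (p : Fin m → ℝ → ℝ)
    (hdecomp : ∀ (t : ℝ) (g : G),
      (∑ i, (p i t : ℂ) * χ i g) = (Real.exp (-t * l g) : ℂ))
    (ε : ℝ) (hε : 0 < ε)
    (hpos : ∀ i, ∀ t : ℝ, 0 ≤ t → t ≤ ε → 0 ≤ p i t) :
    ∀ i, ∀ t : ℝ, 0 ≤ t → 0 ≤ p i t := by
  choose V hV hχ using hirr
  obtain rfl : χ = fun i => (V i).character := funext hχ
  have _ : Invertible (Nat.card G : ℂ) := invertibleOfNonzero (by simp)
  have hcoeff (t : ℝ) (j : Fin m) :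
      (p j t : ℂ) = charPairing ℂ (V j).character (∑ i, (p i t : ℂ) • (V i).character) :=
    (charPairing_sum_smul _ (charPairing_character_simple V hinj) (fun i => (p i t : ℂ)) j).symm
  intro j t ht
  obtain ⟨n, s, hs0, hsε, rfl⟩ := exists_eq_nat_mul_of_le hε ht
  have hpow : ∑ i, (p i (n * s) : ℂ) • (V i).character
      = (∑ i, (p i s : ℂ) • (V i).character) ^ n := by
    funext g
    simp only [Finset.sum_apply, Pi.smul_apply, smul_eq_mul, Pi.pow_apply, hdecomp]
    rw [← Complex.ofReal_pow, ← Real.exp_nat_mul]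
    ring_nf
  have hmem : ∑ i, (p i s : ℂ) • (V i).character ∈ charCone G :=
    sum_mem fun i _ => smul_character_mem_charCone (hpos i s hs0 hsε) (V i)
  have hnonneg := charPairing_nonneg_of_mem_charCone (V j) (pow_mem hmem n)
  rwa [← hpow, ← hcoeff, Complex.zero_le_real] at hnonneg

theorem stmt3 {G : Type} [Group G] [Fintype G] (m : ℕ)
    (χ : Fin m → G → ℂ)
    (hirr : ∀ i, IsIrredChar G (χ i))
    (hinj : Function.Injective χ)
    (hcomplete : ∀ ψ : G → ℂ, IsIrredChar G ψ → ∃ i, ψ = χ i)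
    (l : G → ℝ) (hclass : ∀ g h : G, l (h⁻¹ * g * h) = l g) (hl0 : l 1 = 0)
    (p : Fin m → ℝ → ℝ)
    (hdecomp : ∀ (t : ℝ) (g : G),
      (∑ i, (p i t : ℂ) * χ i g) = (Real.exp (-t * l g) : ℂ))
    (ε : ℝ) (hε : 0 < ε)
    (hpos : ∀ i, ∀ t : ℝ, 0 ≤ t → t ≤ ε → 0 ≤ p i t) :
    ∀ i, ∀ t : ℝ, 0 ≤ t → 0 ≤ p i t :=
  stmt3_general m χ hirr hinj l p hdecomp ε hε hpos
end

section
/- Let G be a finite group and l : G → ℝ a conditionally negative-definite length function. Then the semigroup P_t on the group algebra ℂ[G] defined by P_t(λ(g)) = exp(-t·l(g))·λ(g) is completely positive for every t ≥ 0; that is, for all n, all a_1,…,a_n, b_1,…,b_n ∈ ℂ[G], the element Σ_{i,j} b_i† P_t(a_i† a_j) b_j is positive in ℂ[G]. -/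
open scoped BigOperators ComplexOrder

/-- The adjoint (involution) on the group algebra:
`(Σ α_g λ(g))† = Σ conj(α_g) λ(g⁻¹)`. -/
noncomputable def gstar {G : Type*} [Group G] (x : MonoidAlgebra ℂ G) : MonoidAlgebra ℂ G :=
  MonoidAlgebra.ofCoeff
    (Finsupp.equivMapDomain (Equiv.inv G) (Finsupp.mapRange (starRingEnd ℂ) (map_zero _) x.coeff))

/-- The semigroup `P_t` acting on the group algebra by
`P_t (λ(g)) = exp (-t l(g)) λ(g)`, extended linearly. -/
noncomputable def Psemi {G : Type*} [Group G] (l : G → ℝ) (t : ℝ)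
    (x : MonoidAlgebra ℂ G) : MonoidAlgebra ℂ G :=
  x.coeff.sum fun g a => MonoidAlgebra.single g ((Real.exp (-t * l g) : ℂ) * a)

/-!
By Schoenberg's theorem the heat kernel `K_t(g, h) = exp (-t l(g⁻¹h))` is positive semidefinite:
conditional negativity of `l` makes the Gromov-product kernel `l g + l h - l(g⁻¹h)` positive
semidefinite, by the Schur product theorem so is its entrywise exponential, and `K_t` is that
exponential conjugated by the diagonal matrix `exp (-t l g)`.

Expanding `a_i = Σ_g a_i(g) λ(g)` gives
`Σ_{i,j} b_i† P_t(a_i† a_j) b_j = Σ_{g,h} K_t(g, h) y_g† y_h` with `y_g = Σ_i a_i(g) λ(g) b_i`,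
and a factorisation `K_t = A† A` turns this into `Σ_r x_r† x_r` with `x_r = Σ_g A(r, g) y_g`.
-/

open scoped Matrix

theorem Finset.sum_sum_sum_sum_comm {α β γ δ M : Type*} [AddCommMonoid M] {s : Finset α}
    {t : Finset β} {u : Finset γ} {v : Finset δ} (f : α → β → γ → δ → M) :
    ∑ a ∈ s, ∑ b ∈ t, ∑ c ∈ u, ∑ d ∈ v, f a b c d =
      ∑ c ∈ u, ∑ d ∈ v, ∑ a ∈ s, ∑ b ∈ t, f a b c d := by
  simp only [← Finset.sum_product' s t, ← Finset.sum_product' u v]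
  exact Finset.sum_comm

theorem MonoidAlgebra.sum_single_coeff {R M : Type*} [Semiring R] [Fintype M]
    (x : MonoidAlgebra R M) : ∑ m, single m (x.coeff m) = x := by
  rw [← Finsupp.sum_fintype _ _ fun _ => single_zero _, sum_coeff_single]

namespace Matrix

variable {n : Type*} [Fintype n]

theorem isClosed_setOf_posSemidef : IsClosed {M : Matrix n n ℂ | M.PosSemidef} := by
  classical
  open scoped Matrix.Norms.L2Operator MatrixOrder in
  simpa only [nonneg_iff_posSemidef] using CStarAlgebra.isClosed_nonneg (A := Matrix n n ℂ)

theorem PosSemidef.of_hasSum {f : ℕ → Matrix n n ℂ} {M : Matrix n n ℂ} (hf : HasSum f M)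
    (h : ∀ p, (f p).PosSemidef) : M.PosSemidef :=
  isClosed_setOf_posSemidef.mem_of_tendsto hf.tendsto_sum_nat
    (.of_forall fun _ => posSemidef_sum _ fun p _ => h p)

theorem PosSemidef.map_pow {N : Matrix n n ℂ} (hN : N.PosSemidef) (p : ℕ) :
    (N.map (· ^ p)).PosSemidef := by
  induction p with
  | zero =>
    have hones : N.map (· ^ 0) = vecMulVec 1 (star 1) := by ext; simp [vecMulVec]
    simpa only [hones] using posSemidef_vecMulVec_self_star (1 : n → ℂ)
  | succ p ih =>
    have hsucc : N.map (· ^ (p + 1)) = N.map (· ^ p) ⊙ N := by ext; simp [pow_succ]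
    simpa only [hsucc] using ih.hadamard hN

theorem PosSemidef.map_exp {N : Matrix n n ℂ} (hN : N.PosSemidef) :
    (N.map Complex.exp).PosSemidef := by
  refine PosSemidef.of_hasSum (f := fun p => ((p.factorial : ℂ)⁻¹) • N.map (· ^ p)) ?_
    fun p => (hN.map_pow p).smul (by positivity)
  refine Pi.hasSum.mpr fun g => Pi.hasSum.mpr fun h => ?_
  simpa [Complex.exp_eq_exp_ℂ] using NormedSpace.exp_series_hasSum_exp' (𝕂 := ℂ) (N g h)

end Matrix

section LengthFunction

variable {G : Type*} [Group G]

def IsCondNegDef (l : G → ℝ) : Prop :=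
  ∀ (k : ℕ) (α : Fin k → ℂ) (g : Fin k → G), (∑ i, α i) = 0 →
    (∑ i, ∑ j, α i * (starRingEnd ℂ) (α j) * (l ((g i)⁻¹ * g j) : ℂ)) ≤ 0

theorem IsCondNegDef.sum_le_zero {l : G → ℝ} (hl : IsCondNegDef l) {ι : Type*} [Fintype ι]
    (α : ι → ℂ) (g : ι → G) (hα : ∑ i, α i = 0) :
    ∑ i, ∑ j, α i * starRingEnd ℂ (α j) * (l ((g i)⁻¹ * g j) : ℂ) ≤ 0 := by
  let e := (Fintype.equivFin ι).symm
  have h := hl _ (α ∘ e) (g ∘ e) (by simpa only [Function.comp_apply, e.sum_comp] using hα)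
  simp only [Function.comp_apply] at h
  rwa [Fintype.sum_equiv e _ (fun i => ∑ j, α i * starRingEnd ℂ (α j) * (l ((g i)⁻¹ * g j) : ℂ))
    fun i => Fintype.sum_equiv e _ _ fun j => rfl] at h

/-- Twice the Gromov product `(g | h)` of the length function `l`. -/
def gromovKernel (l : G → ℝ) : Matrix G G ℂ :=
  Matrix.of fun g h => ((l g + l h - l (g⁻¹ * h) : ℝ) : ℂ)

noncomputable def heatKernel (l : G → ℝ) (t : ℝ) : Matrix G G ℂ :=
  Matrix.of fun g h => (Real.exp (-t * l (g⁻¹ * h)) : ℂ)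

variable [Fintype G] {l : G → ℝ}

theorem IsCondNegDef.posSemidef_gromovKernel (hl0 : l 1 = 0) (hlinv : ∀ g, l g⁻¹ = l g)
    (hl : IsCondNegDef l) : (gromovKernel l).PosSemidef := by
  refine Matrix.PosSemidef.of_dotProduct_mulVec_nonneg ?_ fun v => ?_
  · ext g h
    simp only [gromovKernel, Complex.ofReal_sub, Complex.ofReal_add, Matrix.conjTranspose_apply,
      Matrix.of_apply, ← hlinv (h⁻¹ * g), mul_inv_rev, inv_inv, star_sub, star_add,
      RCLike.star_def, Complex.conj_ofReal, sub_left_inj]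
    exact add_comm _ _
  -- Test conditional negativity on the coefficients `conj v`, balanced by `-Σ conj v` at `1`.
  · let β : G → ℂ := fun g => starRingEnd ℂ (v g)
    let α : Option G → ℂ := fun o => o.elim (-∑ g, β g) β
    let p : Option G → G := fun o => o.elim 1 id
    have hα : ∑ o, α o = 0 := by simp [α, Fintype.sum_option]
    suffices star v ⬝ᵥ (gromovKernel l *ᵥ v) =
        -∑ o, ∑ o', α o * starRingEnd ℂ (α o') * (l ((p o)⁻¹ * p o') : ℂ) from
      this ▸ neg_nonneg.mpr (hl.sum_le_zero α p hα)
    simp only [Fintype.sum_option, α, p, β, dotProduct, Matrix.mulVec, gromovKernel,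
      Matrix.of_apply, Option.elim, hl0, hlinv, inv_one, one_mul, mul_one]
    simp only [Complex.conj_conj, map_neg, map_sum, id_eq, Complex.ofReal_zero, mul_zero, zero_add,
      Pi.star_apply, RCLike.star_def, Complex.ofReal_sub, Complex.ofReal_add, Finset.sum_mul,
      Finset.mul_sum, neg_mul, mul_neg, Finset.sum_neg_distrib, mul_add, add_mul, sub_mul, mul_sub,
      Finset.sum_add_distrib, Finset.sum_sub_distrib]
    rw [Finset.sum_comm (f := fun x i => starRingEnd ℂ (v i) * v x * (l x : ℂ))]
    simp only [← Finset.sum_add_distrib, ← Finset.sum_sub_distrib, ← Finset.sum_neg_distrib]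
    exact Finset.sum_congr rfl fun g _ => Finset.sum_congr rfl fun h _ => by ring

theorem IsCondNegDef.posSemidef_heatKernel (hl0 : l 1 = 0) (hlinv : ∀ g, l g⁻¹ = l g)
    (hl : IsCondNegDef l) {t : ℝ} (ht : 0 ≤ t) : (heatKernel l t).PosSemidef := by
  classical
  let D : Matrix G G ℂ := Matrix.diagonal fun g => (Real.exp (-t * l g) : ℂ)
  have hE : (((t : ℂ) • gromovKernel l).map Complex.exp).PosSemidef :=
    ((hl.posSemidef_gromovKernel hl0 hlinv).smul (by exact_mod_cast ht)).map_exp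
  convert hE.conjTranspose_mul_mul_same D using 1
  ext g h
  simp only [heatKernel, gromovKernel, D, Matrix.of_apply, Matrix.diagonal_conjTranspose,
    Matrix.diagonal_mul, Matrix.mul_diagonal, Matrix.map_apply, Matrix.smul_apply, smul_eq_mul,
    Pi.star_apply, RCLike.star_def, Complex.ofReal_exp, ← Complex.exp_conj,
    Complex.conj_ofReal, ← Complex.exp_add]
  congr 1
  push_cast
  ring

end LengthFunction

section GroupAlgebra

open MonoidAlgebra

variable {G : Type*} [Group G]
def IsSumOfHermitianSquares (z : MonoidAlgebra ℂ G) : Prop :=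
  ∃ (k : ℕ) (x : Fin k → MonoidAlgebra ℂ G), z = ∑ r, gstar (x r) * x r

@[simp]
theorem coeff_gstar (x : MonoidAlgebra ℂ G) (g : G) :
    (gstar x).coeff g = starRingEnd ℂ (x.coeff g⁻¹) := rfl

@[simp]
theorem gstar_zero : gstar (0 : MonoidAlgebra ℂ G) = 0 := by
  ext; simp

theorem gstar_add (x y : MonoidAlgebra ℂ G) : gstar (x + y) = gstar x + gstar y := by
  ext; simp

theorem gstar_smul (c : ℂ) (x : MonoidAlgebra ℂ G) :
    gstar (c • x) = starRingEnd ℂ c • gstar x := by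
  ext; simp

theorem gstar_sum {ι : Type*} (s : Finset ι) (f : ι → MonoidAlgebra ℂ G) :
    gstar (∑ i ∈ s, f i) = ∑ i ∈ s, gstar (f i) :=
  map_sum (AddMonoidHom.mk' gstar gstar_add) f s

theorem gstar_single (g : G) (c : ℂ) : gstar (single g c) = single g⁻¹ (starRingEnd ℂ c) := by
  classical
  ext h
  simp only [coeff_gstar, coeff_single, Finsupp.single_apply, inv_eq_iff_eq_inv, eq_comm (a := g)]
  split_ifs <;> simp

theorem gstar_mul (x y : MonoidAlgebra ℂ G) : gstar (x * y) = gstar y * gstar x := by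
  induction x using MonoidAlgebra.induction_linear with
  | zero => simp
  | add x x' hx hx' => simp only [add_mul, mul_add, gstar_add, hx, hx']
  | single g c =>
    induction y using MonoidAlgebra.induction_linear with
    | zero => simp
    | add y y' hy hy' => simp only [mul_add, add_mul, gstar_add, hy, hy']
    | single h d => simp [gstar_single, mul_comm]

@[simp]
theorem coeff_Psemi (l : G → ℝ) (t : ℝ) (x : MonoidAlgebra ℂ G) (g : G) :
    (Psemi l t x).coeff g = Real.exp (-t * l g) * x.coeff g := by
  classical
  simp [Psemi, coeff_finsuppSum, Finsupp.sum_apply, Finsupp.single_apply]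

theorem Psemi_add (l : G → ℝ) (t : ℝ) (x y : MonoidAlgebra ℂ G) :
    Psemi l t (x + y) = Psemi l t x + Psemi l t y := by
  ext; simp [mul_add]

theorem Psemi_sum (l : G → ℝ) (t : ℝ) {ι : Type*} (s : Finset ι) (f : ι → MonoidAlgebra ℂ G) :
    Psemi l t (∑ i ∈ s, f i) = ∑ i ∈ s, Psemi l t (f i) :=
  map_sum (AddMonoidHom.mk' (Psemi l t) (Psemi_add l t)) f s

theorem Psemi_single (l : G → ℝ) (t : ℝ) (g : G) (c : ℂ) :
    Psemi l t (single g c) = single g (Real.exp (-t * l g) * c) := by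
  classical
  ext h
  simp only [coeff_Psemi, coeff_single, Finsupp.single_apply]
  split_ifs <;> simp_all

open scoped MatrixOrder in
theorem isSumOfHermitianSquares_of_posSemidef {ι : Type*} [Fintype ι] {K : Matrix ι ι ℂ}
    (hK : K.PosSemidef) (y : ι → MonoidAlgebra ℂ G) :
    IsSumOfHermitianSquares (∑ g, ∑ h, K g h • (gstar (y g) * y h)) := by
  classical
  obtain ⟨A, rfl⟩ := CStarAlgebra.nonneg_iff_eq_star_mul_self.mp hK.nonneg
  let e := (Fintype.equivFin ι).symm
  refine ⟨Fintype.card ι, fun r => ∑ g, A (e r) g • y g, ?_⟩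
  rw [e.sum_comp (fun r => gstar (∑ g, A r g • y g) * ∑ h, A r h • y h)]
  simp only [Matrix.star_eq_conjTranspose, Matrix.mul_apply, Matrix.conjTranspose_apply,
    Finset.sum_smul, gstar_sum, gstar_smul, Finset.sum_mul_sum, smul_mul_smul_comm]
  exact Finset.sum_comm_cycle

variable [Fintype G]

theorem Psemi_gstar_mul (l : G → ℝ) (t : ℝ) (u v : MonoidAlgebra ℂ G) :
    Psemi l t (gstar u * v) = ∑ g, ∑ h,
      (heatKernel l t g h * (starRingEnd ℂ (u.coeff g) * v.coeff h)) •
        (gstar (single g 1) * single h 1) := by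
  conv_lhs => rw [← sum_single_coeff u, ← sum_single_coeff v]
  simp only [gstar_sum, Finset.sum_mul_sum, Psemi_sum, gstar_single, single_mul_single,
    Psemi_single, smul_single', heatKernel, Matrix.of_apply]
  simp

theorem sum_gstar_mul_Psemi_mul (l : G → ℝ) (t : ℝ) {ι : Type*} [Fintype ι]
    (a b : ι → MonoidAlgebra ℂ G) :
    ∑ i, ∑ j, gstar (b i) * Psemi l t (gstar (a i) * a j) * b j =
      ∑ g, ∑ h, heatKernel l t g h •
        (gstar (∑ i, (a i).coeff g • (single g 1 * b i)) *
          ∑ j, (a j).coeff h • (single h 1 * b j)) := by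
  have hterm : ∀ i j, gstar (b i) * Psemi l t (gstar (a i) * a j) * b j =
      ∑ g, ∑ h, heatKernel l t g h •
        (gstar ((a i).coeff g • (single g 1 * b i)) * ((a j).coeff h • (single h 1 * b j))) := by
    intro i j
    simp only [Psemi_gstar_mul, Finset.mul_sum, Finset.sum_mul, gstar_smul, gstar_mul,
      smul_mul_assoc, mul_smul_comm, smul_smul, mul_assoc, mul_comm ((a j).coeff _)]
  simp only [hterm, gstar_sum, Finset.sum_mul_sum, Finset.smul_sum]
  exact Finset.sum_sum_sum_sum_comm _

end GroupAlgebra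

theorem stmt12 {G : Type*} [Group G] [Fintype G]
    (l : G → ℝ) (hl0 : l 1 = 0) (hlinv : ∀ g : G, l g⁻¹ = l g)
    (hcnd : ∀ (k : ℕ) (α : Fin k → ℂ) (g : Fin k → G), (∑ i, α i) = 0 →
      (∑ i, ∑ j, α i * (starRingEnd ℂ) (α j) * (l ((g i)⁻¹ * g j) : ℂ)) ≤ 0) :
    ∀ t : ℝ, 0 ≤ t →
      ∀ (n : ℕ) (a b : Fin n → MonoidAlgebra ℂ G),
        ∃ (k : ℕ) (x : Fin k → MonoidAlgebra ℂ G),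
          (∑ i, ∑ j, gstar (b i) * Psemi l t (gstar (a i) * a j) * b j) =
            ∑ r, gstar (x r) * x r := by
  intro t ht n a b
  rw [sum_gstar_mul_Psemi_mul]
  exact isSumOfHermitianSquares_of_posSemidef
    ((show IsCondNegDef l from hcnd).posSemidef_heatKernel hl0 hlinv ht) _
end

section
/- For S_3 with class-function length l taking values l_1 = 0 on {e}, l_2 ≥ 0 on the transpositions, l_3 ≥ 0 on the 3-cycles, the three coefficient functions p_1(t) = (1 + 3e^{-t l_2} + 2e^{-t l_3})/6, p_2(t) = (2 - 2e^{-t l_3})/6, p_3(t) = (1 - 3e^{-t l_2} + 2e^{-t l_3})/6 are all nonnegative for every t ≥ 0 if and only if l_2 ≥ (2/3)·l_3. -/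
theorem stmt16 (l2 l3 : ℝ) (h2 : 0 ≤ l2) (h3 : 0 ≤ l3) :
    (∀ t : ℝ, 0 ≤ t →
        0 ≤ (1 + 3 * Real.exp (-t * l2) + 2 * Real.exp (-t * l3)) / 6 ∧
        0 ≤ (2 - 2 * Real.exp (-t * l3)) / 6 ∧
        0 ≤ (1 - 3 * Real.exp (-t * l2) + 2 * Real.exp (-t * l3)) / 6) ↔
      (2 / 3) * l3 ≤ l2 := by
  constructor
  · intro H
    by_contra hlt
    push_neg at hlt
    set d : ℝ := 2 * l3 - 3 * l2 with hd_def
    have hd : 0 < d := by simp only [hd_def]; linarith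
    have hl3 : 0 < l3 := by nlinarith
    set t : ℝ := d / (3 * l2 * l3 + 1) with ht_def
    have hden : 0 < 3 * l2 * l3 + 1 := by positivity
    have htpos : 0 < t := div_pos hd hden
    have hteq : t * (3 * l2 * l3 + 1) = d := div_mul_cancel₀ d (ne_of_gt hden)
    have hp := (H t htpos.le).2.2
    have e1 : 1 - t * l2 ≤ Real.exp (-t * l2) := by
      have := Real.add_one_le_exp (-t * l2); linarith
    have e2 : Real.exp (-t * l3) * (1 + t * l3) ≤ 1 := by
      have h1 : t * l3 + 1 ≤ Real.exp (t * l3) := Real.add_one_le_exp _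
      have h2' : Real.exp (-t * l3) = (Real.exp (t * l3))⁻¹ := by
        rw [← Real.exp_neg]; ring_nf
      have hepos : 0 < Real.exp (t * l3) := Real.exp_pos _
      rw [h2']
      rw [inv_mul_le_iff₀ hepos]
      linarith
    have key : 3 * t * l2 * l3 < d := by nlinarith
    have hexp3 : 0 < Real.exp (-t * l3) := Real.exp_pos _
    have hden2 : 0 < 1 + t * l3 := by positivity
    -- from hp: 3 exp(-t l2) ≤ 1 + 2 exp(-t l3)
    nlinarith [mul_le_mul_of_nonneg_right e1 (le_of_lt hden2),
      mul_le_mul_of_nonneg_right hp (le_of_lt hden2), e2, key, htpos, hl3]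
  · intro h t ht
    have hexp2 : 0 < Real.exp (-t * l2) := Real.exp_pos _
    have hexp3 : 0 < Real.exp (-t * l3) := Real.exp_pos _
    have hle1 : Real.exp (-t * l3) ≤ 1 := by
      apply Real.exp_le_one_iff.mpr
      nlinarith
    refine ⟨by positivity, by linarith, ?_⟩
    set a : ℝ := Real.exp (-(t * l3) / 3) with ha_def
    have hapos : 0 < a := Real.exp_pos _
    have ha3 : Real.exp (-t * l3) = a ^ 3 := by
      rw [ha_def, ← Real.exp_nat_mul]
      norm_num
      ring
    have ha2 : Real.exp (-t * (2 / 3 * l3)) = a ^ 2 := by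
      rw [ha_def, ← Real.exp_nat_mul]
      norm_num
      ring_nf
    have hmono : Real.exp (-t * l2) ≤ a ^ 2 := by
      rw [← ha2]
      apply Real.exp_le_exp.mpr
      nlinarith
    have cube : 0 ≤ 1 - 3 * a ^ 2 + 2 * a ^ 3 := by
      nlinarith [mul_nonneg (sq_nonneg (1 - a)) (le_of_lt hapos), sq_nonneg (1 - a)]
    rw [ha3]
    nlinarith
end

section
/- If 0 ≤ c ≤ b ≤ a ≤ 1 are real numbers, then 1 + (ab/c)² + 2(c − a − b) ≥ 0 (interpreting the statement for c > 0; equivalently, 1 + a²b² + 2c²(c − a − b) ≥ 0 after multiplying by c² when c may be 0). -/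
theorem stmt17 (a b c : ℝ) (h1 : 0 ≤ c) (h2 : c ≤ b) (h3 : b ≤ a) (h4 : a ≤ 1) :
    (0 < c → 0 ≤ 1 + (a * b / c) ^ 2 + 2 * (c - a - b)) ∧
      0 ≤ 1 + a ^ 2 * b ^ 2 + 2 * c ^ 2 * (c - a - b) := by
  constructor
  · intro hc
    have key : a + b - c ≤ a * b / c := by
      rw [le_div_iff₀ hc]
      nlinarith [mul_nonneg (sub_nonneg.2 (h2.trans h3)) (sub_nonneg.2 h2)]
    nlinarith [sq_nonneg (a * b / c - 1)]
  · nlinarith [sq_nonneg (a * b - c), mul_nonneg (mul_nonneg h1 (sub_nonneg.2 (h2.trans h3))) (sub_nonneg.2 h2), sq_nonneg c, mul_nonneg h1 (le_trans (le_trans h1 h2) h3)]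
end
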